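/- Let a, b ∈ ℂ with a ≠ 0. If q : ℂ → ℂ is a measurable function satisfying q(z + 2π/a) = c·q(z) for almost every z ∈ ℂ, where c > 0 is a real constant, and q is not almost everywhere zero, then ∫_ℂ |q| = ∞. -/

import Mathlib

open MeasureTheory Complex

/-- If a measurable `q : ℂ → ℂ` satisfies the multiplicative periodicity
`q(z + 2π/a) = c·q(z)` almost everywhere (with `c > 0` real) and `q` is not a.e. zero,
then `∫_ℂ |q| = ∞`. -/
theorem multiplicative_periodic_not_integrable (a b : ℂ) (ha : a ≠ 0)
    (q : ℂ → ℂ) (hq : Measurable q) (c : ℝ) (hc : 0 < c)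
    (hper : ∀ᵐ z : ℂ, q (z + 2 * (Real.pi : ℂ) / a) = (c : ℂ) * q z)
    (hne : ¬ (q =ᵐ[volume] 0)) :
    ∫⁻ z : ℂ, (‖q z‖₊ : ENNReal) = ⊤ := by
  set T : ℂ := 2 * (Real.pi : ℂ) / a with hTdef
  have hT0 : T ≠ 0 := by
    apply div_ne_zero _ ha
    exact mul_ne_zero two_ne_zero (by exact_mod_cast Real.pi_ne_zero)
  have hc0 : (c : ℂ) ≠ 0 := by exact_mod_cast hc.ne'
  -- translate a.e. statements
  have hshift : ∀ (w : ℂ) {P : ℂ → Prop}, (∀ᵐ z : ℂ, P z) → (∀ᵐ z : ℂ, P (z + w)) :=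
    fun w P h => (measurePreserving_add_right volume w).quasiMeasurePreserving.ae h
  -- backward periodicity
  have hper' : ∀ᵐ z : ℂ, q (z - T) = (c : ℂ)⁻¹ * q z := by
    filter_upwards [hshift (-T) hper] with z h
    simp only [neg_add_cancel, add_neg_cancel, sub_eq_add_neg] at h ⊢
    rw [show z + -T + T = z by ring] at h
    rw [h]
    field_simp
  -- iterated periodicity
  have key : ∀ n : ℤ, ∀ᵐ z : ℂ, q (z + (n : ℂ) * T) = (c : ℂ) ^ n * q z := by
    intro n
    induction n using Int.induction_on with
    | zero => simp
    | succ n ih =>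
        filter_upwards [hshift (((n : ℤ) : ℂ) * T) hper, ih] with z h1 h2
        rw [show z + (((n : ℤ) + 1 : ℤ) : ℂ) * T = z + ((n : ℤ) : ℂ) * T + T by push_cast; ring,
          h1, h2, zpow_add_one₀ hc0]
        ring
    | pred n ih =>
        filter_upwards [hshift (((-n : ℤ) : ℂ) * T) hper', ih] with z h1 h2
        rw [show z + (((-n : ℤ) - 1 : ℤ) : ℂ) * T = z + ((-n : ℤ) : ℂ) * T - T by push_cast; ring,
          h1, h2, zpow_sub_one₀ hc0]
        ring
  -- norm version
  have keyn : ∀ n : ℤ, ∀ᵐ z : ℂ,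
      (‖q (z + (n : ℂ) * T)‖₊ : ENNReal) = ENNReal.ofReal (c ^ n) * ‖q z‖₊ := by
    intro n
    filter_upwards [key n] with z h
    rw [h, nnnorm_mul]
    push_cast
    congr 1
    rw [nnnorm_zpow]
    rw [show ‖(c : ℂ)‖₊ = Real.toNNReal c by
      ext; simp [Real.coe_toNNReal', hc.le, abs_of_pos hc]]
    rw [ENNReal.ofReal]
    congr 1
    apply NNReal.coe_injective
    rw [NNReal.coe_zpow, Real.coe_toNNReal _ hc.le, Real.coe_toNNReal _ (zpow_pos hc n).le]
  -- strips
  set g : ℂ → ℤ := fun z => ⌊(z * T⁻¹).re⌋ with hgdef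
  have hgm : Measurable g :=
    Int.measurable_floor.comp (Complex.measurable_re.comp (measurable_mul_const T⁻¹))
  set A : ℤ → Set ℂ := fun n => g ⁻¹' {n} with hAdef
  have hAm : ∀ n, MeasurableSet (A n) := fun n => hgm (measurableSet_singleton n)
  have hAdisj : Pairwise (Function.onFun Disjoint A) := fun m n hmn => by
    apply Set.disjoint_left.mpr
    intro z hz1 hz2
    exact hmn (hz1.symm.trans hz2)
  have hAunion : (⋃ n, A n) = Set.univ := by
    ext z; simp [hAdef, Set.mem_iUnion]
  -- translation of strips
  have hgshift : ∀ (n : ℤ) (z : ℂ), g (z + (n : ℂ) * T) = g z + n := by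
    intro n z
    simp only [hgdef]
    rw [add_mul, mul_assoc, mul_inv_cancel₀ hT0, mul_one, Complex.add_re]
    rw [show ((n : ℂ)).re = (n : ℝ) by simp]
    exact Int.floor_add_intCast _ _
  have hpre : ∀ n : ℤ, (fun z => z + (n : ℂ) * T) ⁻¹' A n = A 0 := by
    intro n
    ext z
    simp [hAdef, hgshift n z]
  -- strip integrals
  set f : ℂ → ENNReal := fun z => (‖q z‖₊ : ENNReal) with hfdef
  have hfm : Measurable f := hq.nnnorm.coe_nnreal_ennreal
  set J : ℤ → ENNReal := fun n => ∫⁻ z in A n, f z with hJdef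
  have hJ : ∀ n : ℤ, J n = ENNReal.ofReal (c ^ n) * J 0 := by
    intro n
    have h1 : ∫⁻ z in A n, f z
        = ∫⁻ z in (fun z => z + (n : ℂ) * T) ⁻¹' A n, f (z + (n : ℂ) * T) :=
      ((measurePreserving_add_right volume ((n : ℂ) * T)).setLIntegral_comp_preimage
        (hAm n) hfm).symm
    rw [hJdef]
    simp only [h1, hpre n]
    have h2 : ∫⁻ z in A 0, f (z + (n : ℂ) * T)
        = ∫⁻ z in A 0, ENNReal.ofReal (c ^ n) * f z := by
      apply lintegral_congr_ae
      exact ae_restrict_of_ae (keyn n)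
    rw [h2, lintegral_const_mul _ hfm]
  -- J 0 ≠ 0
  have hI : ∫⁻ z : ℂ, f z = ∑' n : ℤ, J n := by
    rw [← setLIntegral_univ, ← hAunion, lintegral_iUnion hAm hAdisj]
  have hJ0 : J 0 ≠ 0 := by
    intro h0
    have hall : ∀ n : ℤ, J n = 0 := fun n => by rw [hJ n, h0, mul_zero]
    have : ∫⁻ z : ℂ, f z = 0 := by rw [hI]; simp [hall]
    rw [lintegral_eq_zero_iff hfm] at this
    apply hne
    filter_upwards [this] with z hz
    simpa [hfdef] using hz
  -- divergence
  rw [show (fun z => ((‖q z‖₊ : ENNReal))) = f from rfl] at *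
  rw [hI]
  refine top_le_iff.mp ?_
  by_cases hc1 : 1 ≤ c
  · have inj : Function.Injective (fun k : ℕ => (k : ℤ)) := fun x y h => Nat.cast_injective h
    calc (⊤ : ENNReal) = ∑' _ : ℕ, J 0 := (ENNReal.tsum_const_eq_top_of_ne_zero hJ0).symm
      _ ≤ ∑' k : ℕ, J ((k : ℤ)) := by
          apply ENNReal.tsum_le_tsum
          intro k
          rw [hJ (k : ℤ)]
          have : (1 : ENNReal) ≤ ENNReal.ofReal (c ^ (k : ℤ)) := by
            rw [show (1 : ENNReal) = ENNReal.ofReal 1 by simp]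
            exact ENNReal.ofReal_le_ofReal (one_le_zpow₀ hc1 (by positivity))
          calc J 0 = 1 * J 0 := (one_mul _).symm
            _ ≤ ENNReal.ofReal (c ^ (k : ℤ)) * J 0 := mul_le_mul_left this _
      _ ≤ ∑' n : ℤ, J n := ENNReal.tsum_comp_le_tsum_of_injective inj J
  · push_neg at hc1
    have inj : Function.Injective (fun k : ℕ => -(k : ℤ)) := fun x y h => by
      simpa using h
    calc (⊤ : ENNReal) = ∑' _ : ℕ, J 0 := (ENNReal.tsum_const_eq_top_of_ne_zero hJ0).symm
      _ ≤ ∑' k : ℕ, J (-(k : ℤ)) := by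
          apply ENNReal.tsum_le_tsum
          intro k
          rw [hJ (-(k : ℤ))]
          have : (1 : ℝ) ≤ c ^ (-(k : ℤ)) := by
            rw [zpow_neg]
            rw [one_le_inv_iff₀]
            constructor
            · positivity
            · exact zpow_le_one₀ hc hc1.le (by positivity)
          have h1 : (1 : ENNReal) ≤ ENNReal.ofReal (c ^ (-(k : ℤ))) := by
            rw [show (1 : ENNReal) = ENNReal.ofReal 1 by simp]
            exact ENNReal.ofReal_le_ofReal this
          calc J 0 = 1 * J 0 := (one_mul _).symm
            _ ≤ ENNReal.ofReal (c ^ (-(k : ℤ))) * J 0 := mul_le_mul_left h1 _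
      _ ≤ ∑' n : ℤ, J n := ENNReal.tsum_comp_le_tsum_of_injective inj J
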